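/- For α ∈ (0,1), the one-dimensional Cesàro kernel of negative order satisfies the pointwise bound |∑_{i=1}^n A_{n−i}^{−α−1} D_i(u)| ≤ C(α) |u|^{α−1} for u ∈ G_m \ {0}, where |u| = ∑_{j=0}^∞ u_j / M_{j+1}. -/

import Mathlib

open MeasureTheory Finset
open scoped ENNReal NNReal

noncomputable section

/-- Discrete measurable structure on each finite cyclic factor. -/
instance (n : ℕ) : MeasurableSpace (ZMod n) := ⊤

/-- The Vilenkin group determined by the generating sequence `m`. -/
abbrev Vil (m : ℕ → ℕ) : Type := ∀ k, ZMod (m k)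

/-- Generalized numbers `M_k`. -/
def Mgen (m : ℕ → ℕ) : ℕ → ℕ
  | 0 => 1
  | k + 1 => m k * Mgen m k

/-- `j`-th digit of `n` in the generalized number system. -/
def vdigit (m : ℕ → ℕ) (n j : ℕ) : ℕ := (n / Mgen m j) % m j

/-- Vilenkin functions `ψ_n = ∏ r_k^{n_k}`. -/
def vpsi (m : ℕ → ℕ) (n : ℕ) (x : Vil m) : ℂ :=
  ∏ k ∈ Finset.range (n + 1),
    Complex.exp (2 * Real.pi * Complex.I * ((x k).val : ℂ) / (m k : ℂ)) ^ vdigit m n k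

/-- Vilenkin–Dirichlet kernels `D_n = ∑_{k<n} ψ_k`. -/
def vD (m : ℕ → ℕ) (n : ℕ) (x : Vil m) : ℂ := ∑ k ∈ Finset.range n, vpsi m k x

/-- Cesàro numbers `A_n^α = ∏_{j=1}^n (α+j) / n!` (so `A_0^α = 1`). -/
def ces (α : ℝ) (n : ℕ) : ℝ := (∏ j ∈ Finset.range n, (α + j + 1)) / n.factorial

/-- The normalized "absolute value" `|u| = ∑_j u_j / M_{j+1}` on a Vilenkin group. -/
def vabs (m : ℕ → ℕ) (u : Vil m) : ℝ := ∑' j, ((u j).val : ℝ) / Mgen m (j + 1)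

/-- Standard subgroup `I_n = {y : y_0 = ⋯ = y_{n-1} = 0}`. -/
def In (m : ℕ → ℕ) (n : ℕ) : Set (Vil m) := {u | ∀ j < n, u j = 0}

/-!
Let `t` be the first index with `u_t ≠ 0` and `N = M_{t+1}`. The factor `r_t(u)` is a nontrivial
`m_t`-th root of unity, so `D_N(u) = 0`, and the block structure `D_{qN+r} = ψ_{qN} D_r` gives
`‖D_k(u)‖ ≤ N` for every `k`; on the other side `|u| ≤ 1/M_t ≤ Λ/N`. Since
`∑_{j≤p} A_j^{-α-1} = A_p^{-α}`, the kernel equals `∑_{j<n} A_j^{-α} ψ_{n-1-j}(u)`, whose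
coefficients are positive and decreasing and whose block sums are at most `2N`. Abel summation
bounds it by `2 ∑_{j<2N} A_j^{-α} = 2 A_{2N-1}^{1-α} ≤ 2e (2N)^{1-α}`, which is `O(|u|^{α-1})`.
-/

section Abel

variable {E : Type*} [SeminormedAddCommGroup E] [NormedSpace ℝ E] {d : ℕ → ℝ} {f : ℕ → E}

lemma norm_sum_range_smul_le_of_antitone (hd : Antitone d) (hd0 : ∀ j, 0 ≤ d j) {n : ℕ} {B : ℝ}
    (hB : ∀ l ≤ n, ‖∑ j ∈ range l, f j‖ ≤ B) :
    ‖∑ j ∈ range n, d j • f j‖ ≤ d 0 * B := by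
  have hstep : ∀ i, 0 ≤ d i - d (i + 1) := fun i => sub_nonneg.2 (hd (Nat.le_succ i))
  rw [sum_range_by_parts]
  calc _ ≤ ‖d (n - 1) • ∑ j ∈ range n, f j‖ + ‖∑ i ∈ range (n - 1),
        (d (i + 1) - d i) • ∑ j ∈ range (i + 1), f j‖ := norm_sub_le _ _
    _ ≤ d (n - 1) * B + ∑ i ∈ range (n - 1), (d i - d (i + 1)) * B := by
      refine add_le_add ?_ ((norm_sum_le _ _).trans (sum_le_sum fun i hi => ?_))
      · rw [norm_smul, Real.norm_of_nonneg (hd0 _)]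
        exact mul_le_mul_of_nonneg_left (hB n le_rfl) (hd0 _)
      · rw [norm_smul, Real.norm_eq_abs, abs_sub_comm, abs_of_nonneg (hstep i)]
        exact mul_le_mul_of_nonneg_left (hB _ (by simp at hi; omega)) (hstep i)
    _ = d 0 * B := by rw [← sum_mul, sum_range_sub']; ring

lemma norm_sum_range_smul_le_two_mul_sum (hd : Antitone d) (hd0 : ∀ j, 0 ≤ d j)
    (hf : ∀ j, ‖f j‖ ≤ 1) {n K : ℕ}
    (hF : ∀ a b, a ≤ b → b ≤ n → ‖∑ j ∈ Ico a b, f j‖ ≤ K) :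
    ‖∑ j ∈ range n, d j • f j‖ ≤ 2 * ∑ j ∈ range K, d j := by
  have hsum0 : 0 ≤ ∑ j ∈ range K, d j := sum_nonneg fun j _ => hd0 j
  have hhead : ∀ l ≤ K, ‖∑ j ∈ range l, d j • f j‖ ≤ ∑ j ∈ range K, d j := by
    intro l hl
    refine (norm_sum_le _ _).trans ((sum_le_sum fun j _ => ?_).trans
      (sum_le_sum_of_subset_of_nonneg (range_subset_range.2 hl) fun j _ _ => hd0 j))
    rw [norm_smul, Real.norm_of_nonneg (hd0 j)]
    exact mul_le_of_le_one_right (hd0 j) (hf j)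
  -- The first `K` terms are bounded termwise, the rest by Abel's inequality with `d_K * K`,
  -- which is again at most `∑_{j<K} d_j` since `d` decreases.
  rcases le_or_gt n K with hn | hn
  · linarith [hhead n hn]
  obtain ⟨l, rfl⟩ := Nat.exists_eq_add_of_le hn.le
  have htail : ‖∑ j ∈ range l, d (K + j) • f (K + j)‖ ≤ d K * K := by
    refine norm_sum_range_smul_le_of_antitone (fun i j hij => hd (by omega))
      (fun j => hd0 _) fun l' hl' => ?_
    simpa [sum_Ico_eq_sum_range] using hF K (K + l') (by omega) (by omega)
  have hdK : d K * K ≤ ∑ j ∈ range K, d j := by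
    simpa [mul_comm] using sum_le_sum fun j (hj : j ∈ range K) => hd (mem_range.1 hj).le
  rw [sum_range_add]
  linarith [norm_add_le (∑ j ∈ range K, d j • f j)
    (∑ j ∈ range l, d (K + j) • f (K + j)), hhead K le_rfl]

end Abel

lemma sum_Icc_mul_sum_range {R : Type*} [CommSemiring R] (c g : ℕ → R) (n : ℕ) :
    ∑ i ∈ Icc 1 n, c (n - i) * ∑ k ∈ range i, g k =
      ∑ j ∈ range n, (∑ i ∈ range (j + 1), c i) * g (n - 1 - j) := by
  have hinner : ∀ k < n, ∑ i ∈ Icc (k + 1) n, c (n - i) =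
      ∑ i ∈ range (n - 1 - k + 1), c i := by
    intro k hk
    rw [← Ico_add_one_right_eq_Icc, sum_Ico_reflect _ _ le_rfl, Nat.sub_self, ← range_eq_Ico,
      show n + 1 - (k + 1) = n - 1 - k + 1 by omega]
  calc ∑ i ∈ Icc 1 n, c (n - i) * ∑ k ∈ range i, g k
      = ∑ k ∈ range n, ∑ i ∈ Icc (k + 1) n, c (n - i) * g k := by
        simp_rw [mul_sum]
        refine sum_comm' fun i k => ?_
        simp only [mem_Icc, mem_range]
        omega
    _ = ∑ k ∈ range n, (∑ i ∈ range (n - 1 - k + 1), c i) * g k :=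
        sum_congr rfl fun k hk => by
          rw [← sum_mul, hinner k (mem_range.1 hk)]
    _ = ∑ j ∈ range n, (∑ i ∈ range (j + 1), c i) * g (n - 1 - j) := by
        rw [← sum_range_reflect]
        refine sum_congr rfl fun j hj => ?_
        rw [Nat.sub_sub_self (by simp at hj; omega)]

lemma rpow_le_mul_rpow_neg_of_mul_le {x v a p : ℝ} (hx : 0 ≤ x) (hv : 0 < v) (hp : 0 ≤ p)
    (h : x * v ≤ a) : x ^ p ≤ a ^ p * v ^ (-p) := by
  rw [Real.rpow_neg hv.le, ← div_eq_mul_inv, ← Real.div_rpow ((mul_nonneg hx hv.le).trans h) hv.le]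
  exact Real.rpow_le_rpow hx ((le_div_iff₀ hv).2 h) hp

lemma ces_succ (β : ℝ) (n : ℕ) : ces β (n + 1) = ces β n + ces (β - 1) (n + 1) := by
  have hprod : ∏ j ∈ range (n + 1), (β - 1 + j + 1) = β * ∏ j ∈ range n, (β + j + 1) := by
    rw [prod_range_succ']
    push_cast
    ring_nf
  have hfact : (n.factorial : ℝ) ≠ 0 := by positivity
  rw [ces, ces, ces, hprod, prod_range_succ, Nat.factorial_succ, Nat.cast_mul]
  field_simp
  push_cast
  ring

lemma sum_range_ces (β : ℝ) (n : ℕ) : ∑ j ∈ range (n + 1), ces (β - 1) j = ces β n := by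
  induction n with
  | zero => simp [ces]
  | succ n ih => rw [sum_range_succ, ih, ← ces_succ]

lemma ces_eq_prod (β : ℝ) (n : ℕ) : ces β n = ∏ k ∈ range n, (1 + β / (k + 1)) := by
  rw [ces, ← prod_range_add_one_eq_factorial, Nat.cast_prod, ← prod_div_distrib]
  refine prod_congr rfl fun k _ => ?_
  field_simp
  push_cast
  ring

lemma one_add_div_succ_pos {β : ℝ} (hβ : -1 < β) (k : ℕ) : 0 < 1 + β / (k + 1) := by
  have hk : (1 : ℝ) ≤ k + 1 := by linarith [k.cast_nonneg (α := ℝ)]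
  rw [← neg_lt_iff_pos_add', lt_div_iff₀ (by positivity)]
  nlinarith

lemma ces_pos {β : ℝ} (hβ : -1 < β) (n : ℕ) : 0 < ces β n := by
  rw [ces_eq_prod]
  exact prod_pos fun k _ => one_add_div_succ_pos hβ k

lemma ces_antitone {β : ℝ} (hβ : -1 < β) (hβ0 : β ≤ 0) : Antitone (ces β) := by
  refine antitone_nat_of_succ_le fun n => ?_
  rw [ces_eq_prod, ces_eq_prod, prod_range_succ]
  exact mul_le_of_le_one_right (prod_pos fun k _ => one_add_div_succ_pos hβ k).le
    (by linarith [div_nonpos_of_nonpos_of_nonneg hβ0 (by positivity : (0 : ℝ) ≤ n + 1)])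

lemma ces_le_exp_mul_harmonic {β : ℝ} (hβ : -1 < β) (n : ℕ) :
    ces β n ≤ Real.exp (β * harmonic n) := by
  have hH : (harmonic n : ℝ) = ∑ k ∈ range n, 1 / ((k : ℝ) + 1) := by
    simp [harmonic]
  rw [ces_eq_prod, hH, mul_sum, Real.exp_sum]
  refine prod_le_prod (fun k _ => (one_add_div_succ_pos hβ k).le) fun k _ => ?_
  rw [mul_one_div, add_comm]
  exact Real.add_one_le_exp _

lemma ces_le_exp_mul_rpow {β : ℝ} (hβ : 0 ≤ β) (n : ℕ) :
    ces β n ≤ Real.exp β * ((n : ℝ) + 1) ^ β := by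
  have hlog : (harmonic n : ℝ) ≤ 1 + Real.log ((n : ℝ) + 1) := by
    refine (harmonic_le_one_add_log n).trans (add_le_add le_rfl ?_)
    rcases Nat.eq_zero_or_pos n with rfl | hn
    · simp
    · exact Real.log_le_log (by exact_mod_cast hn) (by linarith)
  calc ces β n ≤ Real.exp (β * harmonic n) := ces_le_exp_mul_harmonic (by linarith) n
    _ ≤ Real.exp (β * (1 + Real.log ((n : ℝ) + 1))) := by gcongr
    _ = Real.exp β * ((n : ℝ) + 1) ^ β := by
      rw [Real.rpow_def_of_pos (by positivity), ← Real.exp_add]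
      ring_nf

lemma sum_range_ces_sub_one_le {β : ℝ} (hβ : 0 ≤ β) {K : ℕ} (hK : 0 < K) :
    ∑ j ∈ range K, ces (β - 1) j ≤ Real.exp β * (K : ℝ) ^ β := by
  obtain ⟨n, rfl⟩ := Nat.exists_eq_add_of_lt hK
  rw [zero_add, sum_range_ces]
  exact_mod_cast ces_le_exp_mul_rpow hβ n

section Vilenkin

variable {m : ℕ → ℕ}

/-- The generalized Rademacher function `r_k`, so that `ψ_n = ∏ r_k ^ n_k`. -/
def rad (m : ℕ → ℕ) (k : ℕ) (x : Vil m) : ℂ :=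
  Complex.exp (2 * Real.pi * Complex.I * ((x k).val : ℂ) / (m k : ℂ))

lemma Mgen_succ (k : ℕ) : Mgen m (k + 1) = m k * Mgen m k := rfl

lemma Mgen_pos (hm : ∀ k, 0 < m k) (k : ℕ) : 0 < Mgen m k := by
  induction k with
  | zero => exact Nat.one_pos
  | succ k ih => exact Nat.mul_pos (hm k) ih

lemma Mgen_dvd_Mgen {k l : ℕ} (h : k ≤ l) : Mgen m k ∣ Mgen m l := by
  induction l, h using Nat.le_induction with
  | base => exact dvd_rfl
  | succ l _ ih => exact ih.mul_left (m l)

lemma Mgen_mono (hm : ∀ k, 0 < m k) : Monotone (Mgen m) := fun _ l h =>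
  Nat.le_of_dvd (Mgen_pos hm l) (Mgen_dvd_Mgen h)

lemma lt_Mgen (hm : ∀ k, 2 ≤ m k) (k : ℕ) : k < Mgen m k := by
  induction k with
  | zero => exact Nat.one_pos
  | succ k ih => rw [Mgen_succ]; nlinarith [hm k]

lemma vdigit_eq_zero_of_lt {n k : ℕ} (h : n < Mgen m k) : vdigit m n k = 0 := by
  rw [vdigit, Nat.div_eq_of_lt h, Nat.zero_mod]

lemma vpsi_eq_prod (hm : ∀ k, 2 ≤ m k) {n K : ℕ} (h : n < Mgen m K) (x : Vil m) :
    vpsi m n x = ∏ k ∈ range K, rad m k x ^ vdigit m n k := by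
  have hm0 : ∀ k, 0 < m k := fun k => by linarith [hm k]
  set S := max K (n + 1)
  have hext : ∀ L ≤ S, n < Mgen m L → ∏ k ∈ range L, rad m k x ^ vdigit m n k =
      ∏ k ∈ range S, rad m k x ^ vdigit m n k := fun L hLS hL =>
    prod_subset (range_subset_range.2 hLS) fun k _ hk => by
      rw [vdigit_eq_zero_of_lt (hL.trans_le (Mgen_mono hm0 (by simpa using hk))), pow_zero]
  rw [hext K (le_max_left _ _) h,
    ← hext (n + 1) (le_max_right _ _) ((Nat.lt_succ_self n).trans (lt_Mgen hm _))]
  rfl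

lemma norm_rad (k : ℕ) (x : Vil m) : ‖rad m k x‖ = 1 := by
  have : 2 * Real.pi * Complex.I * ((x k).val : ℂ) / (m k : ℂ) =
      ((2 * Real.pi * (x k).val / m k : ℝ) : ℂ) * Complex.I := by
    push_cast; ring
  rw [rad, this, Complex.norm_exp_ofReal_mul_I]

lemma norm_vpsi (n : ℕ) (x : Vil m) : ‖vpsi m n x‖ = 1 := by
  simp only [vpsi, norm_prod, norm_pow]
  exact prod_eq_one fun k _ => by rw [← rad, norm_rad, one_pow]

lemma norm_vD_le (n : ℕ) (x : Vil m) : ‖vD m n x‖ ≤ n := by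
  calc ‖vD m n x‖ ≤ ∑ k ∈ range n, ‖vpsi m k x‖ := norm_sum_le _ _
    _ = n := by simp [norm_vpsi]

lemma vdigit_mul_Mgen_of_lt (hm : ∀ k, 0 < m k) {k t : ℕ} (hk : k < t) (q : ℕ) :
    vdigit m (q * Mgen m t) k = 0 := by
  obtain ⟨c, hc⟩ := Mgen_dvd_Mgen (m := m) (Nat.succ_le_of_lt hk)
  have hq : q * Mgen m t = Mgen m k * (q * c * m k) := by rw [hc, Mgen_succ]; ring
  rw [vdigit, hq, Nat.mul_div_cancel_left _ (Mgen_pos hm k), Nat.mul_mod_left]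

lemma vdigit_mul_Mgen_add (hm : ∀ k, 0 < m k) {t r : ℕ} (hr : r < Mgen m t) (q k : ℕ) :
    vdigit m (q * Mgen m t + r) k = vdigit m (q * Mgen m t) k + vdigit m r k := by
  rcases lt_or_ge k t with hk | hk
  · obtain ⟨c, hc⟩ := Mgen_dvd_Mgen (m := m) (Nat.succ_le_of_lt hk)
    have hq : q * Mgen m t = Mgen m k * (q * c * m k) := by rw [hc, Mgen_succ]; ring
    rw [vdigit, vdigit, vdigit, hq, Nat.mul_add_div (Mgen_pos hm k),
      Nat.mul_div_cancel_left _ (Mgen_pos hm k), Nat.mul_add_mod', Nat.mul_mod_left, zero_add]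
  · obtain ⟨c, hc⟩ := Mgen_dvd_Mgen (m := m) hk
    have hMt := Mgen_pos hm t
    rw [vdigit_eq_zero_of_lt (hr.trans_le (Mgen_mono hm hk)), add_zero, vdigit, vdigit, hc,
      ← Nat.div_div_eq_div_mul, ← Nat.div_div_eq_div_mul, mul_comm q, Nat.mul_add_div hMt,
      Nat.div_eq_of_lt hr, add_zero, Nat.mul_div_cancel_left _ hMt]

lemma vpsi_mul_Mgen_add (hm : ∀ k, 2 ≤ m k) {t r : ℕ} (hr : r < Mgen m t) (q : ℕ) (x : Vil m) :
    vpsi m (q * Mgen m t + r) x = vpsi m (q * Mgen m t) x * vpsi m r x := by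
  have hm0 : ∀ k, 0 < m k := fun k => by linarith [hm k]
  have hK := lt_Mgen hm (q * Mgen m t + r)
  rw [vpsi_eq_prod hm hK, vpsi_eq_prod (K := q * Mgen m t + r) hm (by omega),
    vpsi_eq_prod (K := q * Mgen m t + r) hm (by omega), ← prod_mul_distrib]
  exact prod_congr rfl fun k _ => by rw [vdigit_mul_Mgen_add hm0 hr, pow_add]

lemma vD_mul_Mgen_add (hm : ∀ k, 2 ≤ m k) {t r : ℕ} (hr : r ≤ Mgen m t) (q : ℕ) (x : Vil m) :
    vD m (q * Mgen m t + r) x = vD m (q * Mgen m t) x + vpsi m (q * Mgen m t) x * vD m r x := by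
  rw [vD, sum_range_add, vD, vD, mul_sum]
  exact congrArg _ (sum_congr rfl fun s hs =>
    vpsi_mul_Mgen_add hm ((mem_range.1 hs).trans_le hr) q x)

lemma vD_mul_Mgen (hm : ∀ k, 2 ≤ m k) (q t : ℕ) (x : Vil m) :
    vD m (q * Mgen m t) x = vD m (Mgen m t) x * ∑ a ∈ range q, vpsi m (a * Mgen m t) x := by
  induction q with
  | zero => simp [vD]
  | succ q ih =>
    rw [add_one_mul, vD_mul_Mgen_add hm le_rfl, ih, sum_range_succ]
    ring

lemma vpsi_mul_Mgen (hm : ∀ k, 2 ≤ m k) {t a : ℕ} (ha : a < m t) (x : Vil m) :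
    vpsi m (a * Mgen m t) x = rad m t x ^ a := by
  have hm0 : ∀ k, 0 < m k := fun k => by linarith [hm k]
  have hlt : a * Mgen m t < Mgen m (t + 1) := Nat.mul_lt_mul_of_pos_right ha (Mgen_pos hm0 t)
  rw [vpsi_eq_prod hm hlt, prod_range_succ,
    prod_eq_one fun k hk => by rw [vdigit_mul_Mgen_of_lt hm0 (mem_range.1 hk), pow_zero], one_mul,
    vdigit, Nat.mul_div_cancel _ (Mgen_pos hm0 t), Nat.mod_eq_of_lt ha]

lemma rad_eq_pow (k : ℕ) (x : Vil m) :
    rad m k x = Complex.exp (2 * Real.pi * Complex.I / m k) ^ (x k).val := by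
  rw [rad, ← Complex.exp_nat_mul]
  ring_nf

lemma rad_pow_self (k : ℕ) (x : Vil m) : rad m k x ^ m k = 1 := by
  rcases eq_or_ne (m k) 0 with h | h
  · rw [h, pow_zero]
  · rw [rad_eq_pow, pow_right_comm, (Complex.isPrimitiveRoot_exp _ h).pow_eq_one, one_pow]

lemma rad_ne_one {k : ℕ} (hk : m k ≠ 0) {x : Vil m} (hx : x k ≠ 0) : rad m k x ≠ 1 := by
  have : NeZero (m k) := ⟨hk⟩
  rw [rad_eq_pow, Ne, (Complex.isPrimitiveRoot_exp _ hk).pow_eq_one_iff_dvd]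
  exact Nat.not_dvd_of_pos_of_lt (Nat.pos_of_ne_zero ((ZMod.val_ne_zero _).2 hx)) (ZMod.val_lt _)

lemma vD_Mgen_succ_eq_zero (hm : ∀ k, 2 ≤ m k) {t : ℕ} {x : Vil m} (hx : x t ≠ 0) :
    vD m (Mgen m (t + 1)) x = 0 := by
  have hmt : m t ≠ 0 := by linarith [hm t]
  rw [Mgen_succ, vD_mul_Mgen hm, sum_congr rfl fun a ha => vpsi_mul_Mgen hm
    (mem_range.1 ha) x, geom_sum_eq (rad_ne_one hmt hx), rad_pow_self, sub_self, zero_div,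
    mul_zero]

lemma norm_vD_le_Mgen (hm : ∀ k, 2 ≤ m k) {t : ℕ} {x : Vil m} (h : vD m (Mgen m t) x = 0)
    (n : ℕ) : ‖vD m n x‖ ≤ Mgen m t := by
  have hMt : 0 < Mgen m t := Mgen_pos (fun k => by linarith [hm k]) t
  rw [← Nat.div_add_mod n (Mgen m t), mul_comm, vD_mul_Mgen_add hm (Nat.mod_lt n hMt).le,
    vD_mul_Mgen hm, h, zero_mul, zero_add, norm_mul, norm_vpsi, one_mul]
  exact (norm_vD_le _ x).trans (by exact_mod_cast (Nat.mod_lt n hMt).le)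

lemma vabs_term_le (hm : ∀ k, 0 < m k) (x : Vil m) (j : ℕ) :
    ((x j).val : ℝ) / Mgen m (j + 1) ≤ 1 / Mgen m j - 1 / Mgen m (j + 1) := by
  have : NeZero (m j) := ⟨(hm j).ne'⟩
  have hMj : (0 : ℝ) < Mgen m j := by exact_mod_cast Mgen_pos hm j
  have hval : ((x j).val : ℝ) + 1 ≤ m j := by exact_mod_cast ZMod.val_lt (x j)
  have hmj : (0 : ℝ) < m j := by exact_mod_cast hm j
  rw [Mgen_succ, Nat.cast_mul, show (1 : ℝ) / Mgen m j - 1 / (m j * Mgen m j) =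
    (m j - 1) / (m j * Mgen m j) by field_simp]
  gcongr
  linarith

lemma sum_range_vabs_le (hm : ∀ k, 0 < m k) {t : ℕ} {x : Vil m} (hx : ∀ i < t, x i = 0)
    (J : ℕ) : ∑ j ∈ range J, ((x j).val : ℝ) / Mgen m (j + 1) ≤ 1 / Mgen m t := by
  -- `g` telescopes, with zero increments below `t`.
  set g : ℕ → ℝ := fun j => 1 / Mgen m (max j t)
  have hstep : ∀ j, ((x j).val : ℝ) / Mgen m (j + 1) ≤ g j - g (j + 1) := by
    intro j
    rcases lt_or_ge j t with hj | hj
    · simp [g, hx j hj, max_eq_right hj.le, max_eq_right (Nat.succ_le_of_lt hj)]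
    · simpa [g, max_eq_left hj, max_eq_left (hj.trans (Nat.le_succ j))] using
        vabs_term_le hm x j
  calc ∑ j ∈ range J, ((x j).val : ℝ) / Mgen m (j + 1)
      ≤ ∑ j ∈ range J, (g j - g (j + 1)) := sum_le_sum fun j _ => hstep j
    _ = g 0 - g J := sum_range_sub' g J
    _ ≤ 1 / Mgen m t := by simp only [g, zero_max]; linarith [show 0 ≤ g J by positivity]

lemma summable_vabs (hm : ∀ k, 0 < m k) (x : Vil m) :
    Summable fun j => ((x j).val : ℝ) / Mgen m (j + 1) :=
  summable_of_sum_range_le (fun _ => by positivity)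
    (sum_range_vabs_le hm (t := 0) (fun _ h => absurd h (Nat.not_lt_zero _)))

lemma vabs_le (hm : ∀ k, 0 < m k) {t : ℕ} {x : Vil m} (hx : ∀ i < t, x i = 0) :
    vabs m x ≤ 1 / Mgen m t :=
  Real.tsum_le_of_sum_range_le (fun _ => by positivity) (sum_range_vabs_le hm hx)

lemma vabs_mul_Mgen_succ_le (hm : ∀ k, 0 < m k) {t : ℕ} {x : Vil m} (hx : ∀ i < t, x i = 0) :
    vabs m x * Mgen m (t + 1) ≤ m t := by
  have hMt : (0 : ℝ) < Mgen m t := by exact_mod_cast Mgen_pos hm t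
  calc vabs m x * Mgen m (t + 1) ≤ 1 / Mgen m t * (m t * Mgen m t) := by
        rw [Mgen_succ, Nat.cast_mul]
        gcongr
        exact vabs_le hm hx
    _ = m t := by field_simp

lemma vabs_pos (hm : ∀ k, 0 < m k) {x : Vil m} (hx : x ≠ 0) : 0 < vabs m x := by
  obtain ⟨t, ht⟩ := Function.ne_iff.1 hx
  have : NeZero (m t) := ⟨(hm t).ne'⟩
  have hval : (0 : ℝ) < (x t).val := by
    exact_mod_cast Nat.pos_of_ne_zero ((ZMod.val_ne_zero _).2 ht)
  exact (div_pos hval (by exact_mod_cast Mgen_pos hm _)).trans_le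
    ((summable_vabs hm x).le_tsum t fun _ _ => by positivity)

lemma sum_Icc_ces_mul_vD (β : ℝ) (n : ℕ) (x : Vil m) :
    ∑ i ∈ Icc 1 n, ((ces (β - 1) (n - i) : ℝ) : ℂ) * vD m i x =
      ∑ j ∈ range n, ces β j • vpsi m (n - 1 - j) x := by
  simp only [vD]
  rw [sum_Icc_mul_sum_range (fun j => ((ces (β - 1) j : ℝ) : ℂ))]
  simp only [← Complex.ofReal_sum, sum_range_ces, Complex.real_smul]

lemma sum_Ico_vpsi_sub {a b n : ℕ} (hab : a ≤ b) (hbn : b ≤ n) (x : Vil m) :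
    ∑ j ∈ Ico a b, vpsi m (n - 1 - j) x = vD m (n - a) x - vD m (n - b) x := by
  induction b, hab using Nat.le_induction with
  | base => simp
  | succ b hab ih =>
    have hD : vD m (n - b) x = vD m (n - 1 - b) x + vpsi m (n - 1 - b) x := by
      rw [show n - b = n - 1 - b + 1 by omega]
      exact sum_range_succ _ _
    rw [sum_Ico_succ_top hab, ih (by omega), hD, show n - (b + 1) = n - 1 - b by omega]
    ring

lemma norm_sum_Ico_vpsi_le (hm : ∀ k, 2 ≤ m k) {t : ℕ} {x : Vil m} (h : vD m (Mgen m t) x = 0)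
    {a b n : ℕ} (hab : a ≤ b) (hbn : b ≤ n) :
    ‖∑ j ∈ Ico a b, vpsi m (n - 1 - j) x‖ ≤ 2 * Mgen m t := by
  rw [sum_Ico_vpsi_sub hab hbn]
  linarith [norm_sub_le (vD m (n - a) x) (vD m (n - b) x), norm_vD_le_Mgen hm h (n - a),
    norm_vD_le_Mgen hm h (n - b)]

end Vilenkin

/-- pointwise bound `|∑_{i=1}^n A_{n-i}^{-α-1} D_i(u)| ≤ C(α)|u|^{α-1}`. -/
theorem negative_cesaro_kernel_pointwise (m : ℕ → ℕ) (hm : ∀ k, 2 ≤ m k)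
    (Λ : ℕ) (hΛ : ∀ k, m k ≤ Λ) (α : ℝ) (hα : α ∈ Set.Ioo (0 : ℝ) 1) :
    ∃ C : ℝ, 0 < C ∧ ∀ n : ℕ, 1 ≤ n → ∀ u : Vil m, u ≠ 0 →
      ‖∑ i ∈ Finset.Icc 1 n, ((ces (-α - 1) (n - i) : ℝ) : ℂ) * vD m i u‖ ≤
        C * vabs m u ^ (α - 1) := by
  classical
  obtain ⟨hα0, hα1⟩ := hα
  have hm0 : ∀ k, 0 < m k := fun k => by linarith [hm k]
  have hΛ0 : (0 : ℝ) < Λ := by exact_mod_cast (hm0 0).trans_le (hΛ 0)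
  refine ⟨2 * Real.exp (1 - α) * (2 * Λ) ^ (1 - α), by positivity, fun n _ u hu => ?_⟩
  have hex : ∃ t, u t ≠ 0 := Function.ne_iff.1 hu
  obtain ⟨t, ht, hbelow⟩ : ∃ t, u t ≠ 0 ∧ ∀ i < t, u i = 0 :=
    ⟨Nat.find hex, Nat.find_spec hex, fun i hi => not_not.1 (Nat.find_min hex hi)⟩
  set N := Mgen m (t + 1)
  have hvN : ((2 * N : ℕ) : ℝ) * vabs m u ≤ 2 * Λ := by
    push_cast
    linarith [vabs_mul_Mgen_succ_le hm0 hbelow, (Nat.cast_le (α := ℝ)).2 (hΛ t)]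
  have hpartial : ∀ a b, a ≤ b → b ≤ n →
      ‖∑ j ∈ Ico a b, vpsi m (n - 1 - j) u‖ ≤ (2 * N : ℕ) := fun a b hab hbn => by
    exact_mod_cast norm_sum_Ico_vpsi_le hm (vD_Mgen_succ_eq_zero hm ht) hab hbn
  have hsum := sum_range_ces_sub_one_le (β := 1 - α) (by linarith) (K := 2 * N)
    (Nat.mul_pos two_pos (Mgen_pos hm0 _))
  rw [sub_sub_cancel_left] at hsum
  calc ‖∑ i ∈ Icc 1 n, ((ces (-α - 1) (n - i) : ℝ) : ℂ) * vD m i u‖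
      = ‖∑ j ∈ range n, ces (-α) j • vpsi m (n - 1 - j) u‖ := by
        rw [sum_Icc_ces_mul_vD]
    _ ≤ 2 * ∑ j ∈ range (2 * N), ces (-α) j :=
        norm_sum_range_smul_le_two_mul_sum (ces_antitone (by linarith) (by linarith))
          (fun j => (ces_pos (by linarith) j).le) (fun _ => (norm_vpsi _ _).le) hpartial
    _ ≤ 2 * (Real.exp (1 - α) * ((2 * N : ℕ) : ℝ) ^ (1 - α)) := by gcongr
    _ ≤ 2 * (Real.exp (1 - α) * ((2 * Λ) ^ (1 - α) * vabs m u ^ (-(1 - α)))) := by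
        gcongr
        exact rpow_le_mul_rpow_neg_of_mul_le (by positivity) (vabs_pos hm0 hu) (by linarith) hvN
    _ = 2 * Real.exp (1 - α) * (2 * Λ) ^ (1 - α) * vabs m u ^ (α - 1) := by
        rw [neg_sub]; ring
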